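/- arXiv:2106.04117 — 6 statements merged into one kernel-verified Lean document; each statement's English description precedes it below -/
import Mathlib

section
/- Fix a finite state space S partitioned into layers S₀,…,S_L with S₀ = {s₀} and S_L = {s_L}, a finite action set A, and a layered transition function P (so P(·|s,a) is supported on the next layer). For any stochastic policy π, any loss function ℓ̊ : S × A → ℝ, define the state-action value Q^π(s,a) = ℓ̊(s,a) + Σ_{s'} P(s'|s,a) V^π(s') and V^π(s) = Σ_a π(a|s) Q^π(s,a), with V^π(s_L) = 0. Define g(s,a) = Q^π(s,a) − V^π(s) − ℓ̊(s,a). Then for every policy π', the inner product ⟨q^{P,π'}, g⟩ = Σ_{s≠s_L} Σ_a q^{P,π'}(s,a) g(s,a) equals −V^π(s₀), where q^{P,π'} is the occupancy measure of π' under P. In particular ⟨q^{P,π'}, g⟩ is independent of π'. -/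
open Finset

/-!
Write `Φ k = ∑ s ∈ S k, q k s V k s`. Since `Q - V - ℓ = P V - V`, the layer-`k` term of the
sum is `∑ q π' (P V_{k+1}) - ∑ q π' V_k`; pushing `q` forward through `π'` and `P` turns the
first part into `Φ (k+1)`, and `∑ₐ π' = 1` turns the second into `Φ k`. The sum therefore
telescopes to `Φ L - Φ 0 = 0 - V 0 s0`.
-/

section Layer

variable {σ σ' α : Type*} [Fintype σ] [Fintype σ'] [Fintype α]

def pushOccupancy (q : σ → ℝ) (π : σ → α → ℝ) (P : σ → α → σ' → ℝ) (s' : σ') : ℝ :=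
  ∑ s, ∑ a, q s * π s a * P s a s'

theorem sum_pushOccupancy_mul (q : σ → ℝ) (π : σ → α → ℝ) (P : σ → α → σ' → ℝ) (f : σ' → ℝ) :
    ∑ s', pushOccupancy q π P s' * f s' = ∑ s, ∑ a, q s * π s a * ∑ s', P s a s' * f s' := by
  simp only [pushOccupancy, sum_mul, mul_sum]
  rw [sum_comm]
  refine sum_congr rfl fun s _ => ?_
  rw [sum_comm]
  exact sum_congr rfl fun a _ => sum_congr rfl fun s' _ => by ring

theorem sum_occupancy_mul_lookahead_sub (q : σ → ℝ) (π : σ → α → ℝ)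
    (hπ : ∀ s, ∑ a, π s a = 1) (P : σ → α → σ' → ℝ) (W : σ → ℝ) (W' : σ' → ℝ) :
    ∑ s, ∑ a, q s * π s a * (∑ s', P s a s' * W' s' - W s) =
      ∑ s', pushOccupancy q π P s' * W' s' - ∑ s, q s * W s := by
  have hplay : ∀ s, ∑ a, q s * π s a * W s = q s * W s := fun s => by
    rw [← sum_mul, ← mul_sum, hπ, mul_one]
  simp only [mul_sub, sum_sub_distrib, hplay, sum_pushOccupancy_mul]

end Layer

theorem loss_shifting_invariant_general
    (L : ℕ) (S : ℕ → Type) [∀ k, Fintype (S k)] [DecidableEq (S 0)]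
    (A : Type) [Fintype A]
    (P : ∀ k, S k → A → S (k + 1) → ℝ)
    (s0 : S 0)
    (pol' : ∀ k, S k → A → ℝ)
    (hpol'sum : ∀ k (s : S k), ∑ a : A, pol' k s a = 1)
    (ℓ : ∀ k, S k → A → ℝ)
    (Q : ∀ k, S k → A → ℝ) (V : ∀ k, S k → ℝ)
    (hVL : ∀ s : S L, V L s = 0)
    (hQ : ∀ k, k < L → ∀ (s : S k) (a : A),
      Q k s a = ℓ k s a + ∑ s' : S (k + 1), P k s a s' * V (k + 1) s')
    (q : ∀ k, S k → ℝ)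
    (hq0 : ∀ s : S 0, q 0 s = if s = s0 then 1 else 0)
    (hqrec : ∀ k, k < L → ∀ s' : S (k + 1),
      q (k + 1) s' = ∑ s : S k, ∑ a : A, q k s * pol' k s a * P k s a s') :
    ∑ k ∈ Finset.range L, ∑ s : S k, ∑ a : A,
        q k s * pol' k s a * (Q k s a - V k s - ℓ k s a) = - V 0 s0 := by
  have hstep : ∀ k ∈ range L, ∑ s : S k, ∑ a : A,
      q k s * pol' k s a * (Q k s a - V k s - ℓ k s a) =
        ∑ s, q (k + 1) s * V (k + 1) s - ∑ s, q k s * V k s := by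
    intro k hk
    have hk : k < L := mem_range.1 hk
    have hgap : ∀ s a, Q k s a - V k s - ℓ k s a = ∑ s', P k s a s' * V (k + 1) s' - V k s :=
      fun s a => by rw [hQ k hk]; ring
    have hpush : q (k + 1) = pushOccupancy (q k) (pol' k) (P k) := funext (hqrec k hk)
    simp only [hgap, hpush]
    exact sum_occupancy_mul_lookahead_sub _ _ (hpol'sum k) _ _ _
  rw [sum_congr rfl hstep, sum_range_sub (fun k => ∑ s, q k s * V k s)]
  simp [hVL, hq0]

/-- **Loss-shifting invariance** in a layered episodic MDP.
States are partitioned into layers `S 0, …, S L` with initial state `s0 : S 0`;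
`P` is a layered transition function and `pol`, `pol'` are stochastic policies.
Given the value functions `Q, V` of policy `pol` for the loss `ℓ` (defined by the
Bellman recursion with `V L = 0`), and the occupancy measure `q` of `pol'` under `P`
(given by the forward recursion, where `q k s * pol' k s a` is the probability of
visiting the pair `(s,a)`), the inner product of the occupancy measure of `pol'` with
the shifting function `g(s,a) = Q(s,a) − V(s) − ℓ(s,a)` equals `−V(s0)`;
in particular it is independent of `pol'`. -/
theorem loss_shifting_invariant
    (L : ℕ) (S : ℕ → Type) [∀ k, Fintype (S k)] [DecidableEq (S 0)]
    (A : Type) [Fintype A]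
    (P : ∀ k, S k → A → S (k + 1) → ℝ)
    (hPnn : ∀ k (s : S k) (a : A) (s' : S (k + 1)), 0 ≤ P k s a s')
    (hPsum : ∀ k (s : S k) (a : A), ∑ s' : S (k + 1), P k s a s' = 1)
    (s0 : S 0)
    (pol pol' : ∀ k, S k → A → ℝ)
    (hpolnn : ∀ k (s : S k) (a : A), 0 ≤ pol k s a)
    (hpolsum : ∀ k (s : S k), ∑ a : A, pol k s a = 1)
    (hpol'nn : ∀ k (s : S k) (a : A), 0 ≤ pol' k s a)
    (hpol'sum : ∀ k (s : S k), ∑ a : A, pol' k s a = 1)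
    (ℓ : ∀ k, S k → A → ℝ)
    (Q : ∀ k, S k → A → ℝ) (V : ∀ k, S k → ℝ)
    (hVL : ∀ s : S L, V L s = 0)
    (hQ : ∀ k, k < L → ∀ (s : S k) (a : A),
      Q k s a = ℓ k s a + ∑ s' : S (k + 1), P k s a s' * V (k + 1) s')
    (hV : ∀ k, k < L → ∀ s : S k, V k s = ∑ a : A, pol k s a * Q k s a)
    (q : ∀ k, S k → ℝ)
    (hq0 : ∀ s : S 0, q 0 s = if s = s0 then 1 else 0)
    (hqrec : ∀ k, k < L → ∀ s' : S (k + 1),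
      q (k + 1) s' = ∑ s : S k, ∑ a : A, q k s * pol' k s a * P k s a s') :
    ∑ k ∈ Finset.range L, ∑ s : S k, ∑ a : A,
        q k s * pol' k s a * (Q k s a - V k s - ℓ k s a) = - V 0 s0 :=
  loss_shifting_invariant_general L S A P s0 pol' hpol'sum ℓ Q V hVL hQ q hq0 hqrec
end

section
/- In the setting of the importance-weighted estimator for a layered episodic MDP with known transition, the conditional variance of the shifted loss satisfies E_t[(Q̂_t(s,a) − V̂_t(s))²] ≤ 2L²(1 − π_t(a|s))/q_t(s,a) for every state-action pair (s,a), where E_t denotes expectation over the trajectory of episode t conditioned on the past. -/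
open Finset

/-- A trajectory in a layered episodic MDP with `L` layers: a state in each of the
layers `0, …, L` together with an action at each of the layers `0, …, L-1`. -/
abbrev Traj (L : ℕ) (S : ℕ → Type) (A : Type) : Type :=
  ((k : Fin (L + 1)) → S k) × (Fin L → A)

/-!
Write `X = Q̂(s,a)`, `π = π(a|s)` and `Y = ∑_{b ≠ a} π(b|s) Q̂(s,b) ≥ 0`, so that
`V̂(s) = π X + Y` and `(X - V̂(s))² ≤ (1 - π)² X² + Y²`. It therefore suffices to know
`X, Y ≤ L / q(s,a)` along every trajectory, `E X ≤ L` and `E Y ≤ (1 - π) L`.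

The mean bounds: `(s,a)` is visited at layer `k` with probability `q(s,a)`, so `E ℓ̂ = ℓ`;
since value functions are linear in the loss, `E Q̂` is the value function of `ℓ ∈ [0,1]`,
hence at most `L`. The pathwise bounds: on every trajectory `∑_{s,a} q(s,a) ℓ̂(s,a) ≤ 1` in
each layer, and weights dominated by the occupancy measure stay dominated when pushed forward
through the Bellman equations, so `∑ u Q̂ ≤ L` whenever `0 ≤ u ≤ q`.
-/

section LayeredChain

variable {S : ℕ → Type} {A : Type}

def pathWeight (L : ℕ) (init : S 0 → ℝ) (K : ∀ j, S j → A → S (j + 1) → ℝ)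
    (ω : Traj L S A) : ℝ :=
  init (ω.1 ⟨0, Nat.succ_pos L⟩) *
    ∏ j : Fin L, K j (ω.1 ⟨j, Nat.lt_succ_of_lt j.2⟩) (ω.2 j) (ω.1 ⟨j + 1, Nat.succ_lt_succ j.2⟩)

theorem pathWeight_nonneg {L : ℕ} {init : S 0 → ℝ} {K : ∀ j, S j → A → S (j + 1) → ℝ}
    (hinit : ∀ x, 0 ≤ init x) (hK : ∀ j x c u, 0 ≤ K j x c u) (ω : Traj L S A) :
    0 ≤ pathWeight L init K ω :=
  mul_nonneg (hinit _) (prod_nonneg fun _ _ => hK _ _ _ _)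

variable [∀ k, Fintype (S k)] [Fintype A]

def stateMarginal (init : S 0 → ℝ) (K : ∀ j, S j → A → S (j + 1) → ℝ) : ∀ j, S j → ℝ
  | 0 => init
  | j + 1 => fun u => ∑ x : S j, ∑ c : A, stateMarginal init K j x * K j x c u

theorem stateMarginal_succ (init : S 0 → ℝ) (K : ∀ j, S j → A → S (j + 1) → ℝ) (j : ℕ)
    (u : S (j + 1)) :
    stateMarginal init K (j + 1) u = ∑ x : S j, ∑ c : A, stateMarginal init K j x * K j x c u :=
  rfl

theorem stateMarginal_nonneg {init : S 0 → ℝ} {K : ∀ j, S j → A → S (j + 1) → ℝ}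
    (hinit : ∀ x, 0 ≤ init x) (hK : ∀ j x c u, 0 ≤ K j x c u) :
    ∀ j (x : S j), 0 ≤ stateMarginal init K j x
  | 0, x => hinit x
  | j + 1, u => sum_nonneg fun x _ => sum_nonneg fun c _ =>
      mul_nonneg (stateMarginal_nonneg hinit hK j x) (hK j x c u)

theorem stateMarginal_congr {init : S 0 → ℝ} {K K' : ∀ j, S j → A → S (j + 1) → ℝ} {m : ℕ}
    (h : ∀ j < m, K j = K' j) : ∀ j ≤ m, stateMarginal init K j = stateMarginal init K' j
  | 0, _ => rfl
  | j + 1, hj => by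
    funext u
    simp only [stateMarginal_succ, stateMarginal_congr h j (by omega), h j (by omega)]

theorem sum_stateMarginal_succ {init : S 0 → ℝ} {K : ∀ j, S j → A → S (j + 1) → ℝ} {j : ℕ}
    (hK : ∀ x : S j, ∑ c, ∑ u, K j x c u = 1) :
    ∑ u, stateMarginal init K (j + 1) u = ∑ x, stateMarginal init K j x := by
  simp only [stateMarginal_succ]
  rw [sum_comm]
  refine sum_congr rfl fun x _ => ?_
  rw [sum_comm]
  simp_rw [← mul_sum, hK, mul_one]

theorem sum_stateMarginal_eq {init : S 0 → ℝ} {K : ∀ j, S j → A → S (j + 1) → ℝ} {m n : ℕ}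
    (hmn : m ≤ n) (hK : ∀ j, m ≤ j → j < n → ∀ x : S j, ∑ c, ∑ u, K j x c u = 1) :
    ∑ u, stateMarginal init K n u = ∑ x, stateMarginal init K m x := by
  induction n, hmn using Nat.le_induction with
  | base => rfl
  | succ n hmn ih =>
    rw [sum_stateMarginal_succ (hK n hmn n.lt_succ_self)]
    exact ih fun j hj hjn => hK j hj (by omega)

theorem stateMarginal_shift (init : S 0 → ℝ) (K : ∀ j, S j → A → S (j + 1) → ℝ) (j : ℕ) :
    stateMarginal init K (j + 1) =
      stateMarginal (S := fun n => S (n + 1)) (stateMarginal init K 1) (fun n => K (n + 1)) j := by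
  induction j with
  | zero => rfl
  | succ j ih => funext u; rw [stateMarginal_succ, ih]; rfl

theorem sum_pathWeight (L : ℕ) (init : S 0 → ℝ) (K : ∀ j, S j → A → S (j + 1) → ℝ) :
    ∑ ω : Traj L S A, pathWeight L init K ω = ∑ u, stateMarginal init K L u := by
  induction L generalizing S init K with
  | zero =>
    rw [Fintype.sum_prod_type, ← (Fin.consEquiv fun k : Fin 1 => S k).sum_comp]
    simp [pathWeight, stateMarginal, Fintype.sum_prod_type, Fin.consEquiv]
  | succ L ih =>
    rw [stateMarginal_shift, ← ih (S := fun n => S (n + 1)),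
      ← ((Equiv.prodProdProdComm (S 0) A _ _).trans
        ((Fin.consEquiv fun k : Fin (L + 2) => S k).prodCongr
          (Fin.consEquiv fun _ : Fin (L + 1) => A))).sum_comp,
      Fintype.sum_prod_type, sum_comm]
    refine sum_congr rfl fun ω' _ => ?_
    rw [Fintype.sum_prod_type, pathWeight, stateMarginal_succ, sum_mul]
    refine sum_congr rfl fun x _ => ?_
    rw [sum_mul]
    refine sum_congr rfl fun c _ => ?_
    rw [pathWeight, Fin.prod_univ_succ, ← mul_assoc]
    rfl

theorem sum_pathWeight_mul_indicator [DecidableEq A] {L m : ℕ} [DecidableEq (S m)] (hm : m < L)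
    (init : S 0 → ℝ) (K : ∀ j, S j → A → S (j + 1) → ℝ)
    (hK : ∀ j, m < j → j < L → ∀ x : S j, ∑ c, ∑ u, K j x c u = 1) (t : S m) (b : A) :
    ∑ ω : Traj L S A, pathWeight L init K ω *
        (if ω.1 ⟨m, Nat.lt_succ_of_lt hm⟩ = t ∧ ω.2 ⟨m, hm⟩ = b then 1 else 0) =
      stateMarginal init K m t * ∑ u, K m t b u := by
  classical
  -- `K'` keeps, at layer `m`, only the transitions out of `(t, b)`; states of different layers
  -- are compared in `Σ i, S i`, which avoids casting `x : S j` to `S m`.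
  set K' : ∀ j, S j → A → S (j + 1) → ℝ := fun j x c u =>
    if j = m → (⟨j, x⟩ : Σ i, S i) = ⟨m, t⟩ ∧ c = b then K j x c u else 0
  have hK'K : ∀ j ≠ m, K' j = K j := fun j hj => by
    funext x c u
    simp only [K', hj, false_imp_iff, if_true]
  have hvisit : ∀ ω : Traj L S A,
      (∀ j : Fin L, (j : ℕ) = m →
        (⟨j, ω.1 ⟨j, Nat.lt_succ_of_lt j.2⟩⟩ : Σ i, S i) = ⟨m, t⟩ ∧ ω.2 j = b) ↔
      ω.1 ⟨m, Nat.lt_succ_of_lt hm⟩ = t ∧ ω.2 ⟨m, hm⟩ = b := by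
    intro ω
    constructor
    · intro h
      simpa using h ⟨m, hm⟩ rfl
    · rintro ⟨ht, hb⟩ ⟨j, hj⟩ (rfl : j = m)
      simpa using ⟨ht, hb⟩
  have hpath : ∀ ω, pathWeight L init K ω *
      (if ω.1 ⟨m, Nat.lt_succ_of_lt hm⟩ = t ∧ ω.2 ⟨m, hm⟩ = b then 1 else 0) =
      pathWeight L init K' ω := by
    intro ω
    simp only [pathWeight, K', Fintype.prod_ite_zero, hvisit]
    split_ifs <;> ring
  have hK'm : ∀ u, stateMarginal init K' (m + 1) u = stateMarginal init K m t * K m t b u := by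
    intro u
    rw [stateMarginal_succ, stateMarginal_congr (fun j hj => hK'K j hj.ne) m le_rfl]
    simp [K', ite_and]
  calc _ = ∑ ω : Traj L S A, pathWeight L init K' ω := sum_congr rfl fun ω _ => hpath ω
    _ = ∑ u, stateMarginal init K' (m + 1) u := by
      rw [sum_pathWeight]
      refine sum_stateMarginal_eq hm fun j hj hjL x => ?_
      rw [hK'K j (by omega)]
      exact hK j hj hjL x
    _ = _ := by simp_rw [hK'm, mul_sum]

end LayeredChain

section ValueFunctions

variable {S : ℕ → Type} [∀ k, Fintype (S k)] {A : Type} [Fintype A]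

structure IsValueFunctions (L : ℕ) (P : ∀ k, S k → A → S (k + 1) → ℝ) (pol : ∀ k, S k → A → ℝ)
    (l Q : ∀ k, S k → A → ℝ) (V : ∀ k, S k → ℝ) : Prop where
  terminal : ∀ s : S L, V L s = 0
  Q_eq : ∀ k, k < L → ∀ (s : S k) (a : A), Q k s a = l k s a + ∑ s', P k s a s' * V (k + 1) s'
  V_eq : ∀ k, k < L → ∀ s : S k, V k s = ∑ a, pol k s a * Q k s a

namespace IsValueFunctions

variable {L : ℕ} {P : ∀ k, S k → A → S (k + 1) → ℝ} {pol : ∀ k, S k → A → ℝ}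
  {l Q : ∀ k, S k → A → ℝ} {V : ∀ k, S k → ℝ}

theorem sum {Ω : Type*} [Fintype Ω] {l Q : Ω → ∀ k, S k → A → ℝ} {V : Ω → ∀ k, S k → ℝ}
    (h : ∀ ω, IsValueFunctions L P pol (l ω) (Q ω) (V ω)) (w : Ω → ℝ) :
    IsValueFunctions L P pol (fun k s a => ∑ ω, w ω * l ω k s a)
      (fun k s a => ∑ ω, w ω * Q ω k s a) (fun k s => ∑ ω, w ω * V ω k s) where
  terminal s := by simp [(h _).terminal]
  Q_eq k hk s a := by
    simp only [(h _).Q_eq k hk s a, mul_add, sum_add_distrib, mul_sum]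
    rw [sum_comm]
    simp only [mul_left_comm]
  V_eq k hk s := by
    simp only [(h _).V_eq k hk s, mul_sum]
    rw [sum_comm]
    simp only [mul_left_comm]

theorem Q_nonneg_of_V_succ_nonneg (h : IsValueFunctions L P pol l Q V) {k : ℕ} (hk : k < L)
    (hPnn : ∀ k (s : S k) a s', 0 ≤ P k s a s') (hl : ∀ (s : S k) a, 0 ≤ l k s a)
    (hV : ∀ s', 0 ≤ V (k + 1) s') (s : S k) (a : A) : 0 ≤ Q k s a := by
  rw [h.Q_eq k hk]
  exact add_nonneg (hl s a) (sum_nonneg fun s' _ => mul_nonneg (hPnn k s a s') (hV s'))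

theorem V_nonneg (h : IsValueFunctions L P pol l Q V) (hPnn : ∀ k (s : S k) a s', 0 ≤ P k s a s')
    (hpolnn : ∀ k (s : S k) a, 0 ≤ pol k s a) (hl : ∀ k, k < L → ∀ (s : S k) a, 0 ≤ l k s a)
    {k : ℕ} (hk : k ≤ L) : ∀ s : S k, 0 ≤ V k s := by
  induction hk using Nat.decreasingInduction with
  | self => exact fun s => (h.terminal s).ge
  | of_succ k hk ih =>
    intro s
    rw [h.V_eq k hk]
    exact sum_nonneg fun a _ =>
      mul_nonneg (hpolnn k s a) (h.Q_nonneg_of_V_succ_nonneg hk hPnn (hl k hk) ih s a)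

theorem Q_nonneg (h : IsValueFunctions L P pol l Q V) (hPnn : ∀ k (s : S k) a s', 0 ≤ P k s a s')
    (hpolnn : ∀ k (s : S k) a, 0 ≤ pol k s a) (hl : ∀ k, k < L → ∀ (s : S k) a, 0 ≤ l k s a)
    {k : ℕ} (hk : k < L) (s : S k) (a : A) : 0 ≤ Q k s a :=
  h.Q_nonneg_of_V_succ_nonneg hk hPnn (hl k hk) (h.V_nonneg hPnn hpolnn hl hk) s a

theorem Q_le_of_V_succ_le (h : IsValueFunctions L P pol l Q V) {k : ℕ} (hk : k < L)
    (hPnn : ∀ k (s : S k) a s', 0 ≤ P k s a s') (hPsum : ∀ k (s : S k) a, ∑ s', P k s a s' = 1)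
    {c : ℝ} (hV : ∀ s', V (k + 1) s' ≤ c) (s : S k) (a : A) : Q k s a ≤ l k s a + c := by
  rw [h.Q_eq k hk]
  gcongr
  calc ∑ s', P k s a s' * V (k + 1) s' ≤ ∑ s', P k s a s' * c :=
        sum_le_sum fun s' _ => mul_le_mul_of_nonneg_left (hV s') (hPnn k s a s')
    _ = c := by rw [← sum_mul, hPsum, one_mul]

theorem V_le_of_Q_le (h : IsValueFunctions L P pol l Q V) {k : ℕ} (hk : k < L)
    (hpolnn : ∀ k (s : S k) a, 0 ≤ pol k s a) (hpolsum : ∀ k (s : S k), ∑ a, pol k s a = 1)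
    {c : ℝ} {s : S k} (hQ : ∀ a, Q k s a ≤ c) : V k s ≤ c := by
  rw [h.V_eq k hk]
  calc ∑ a, pol k s a * Q k s a ≤ ∑ a, pol k s a * c :=
        sum_le_sum fun a _ => mul_le_mul_of_nonneg_left (hQ a) (hpolnn k s a)
    _ = c := by rw [← sum_mul, hpolsum, one_mul]

theorem V_le (h : IsValueFunctions L P pol l Q V)
    (hPnn : ∀ k (s : S k) a s', 0 ≤ P k s a s') (hPsum : ∀ k (s : S k) a, ∑ s', P k s a s' = 1)
    (hpolnn : ∀ k (s : S k) a, 0 ≤ pol k s a) (hpolsum : ∀ k (s : S k), ∑ a, pol k s a = 1)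
    (hl : ∀ k, k < L → ∀ (s : S k) a, l k s a ≤ 1) {k : ℕ} (hk : k ≤ L) :
    ∀ s : S k, V k s ≤ L - k := by
  induction hk using Nat.decreasingInduction with
  | self => exact fun s => by simp [h.terminal s]
  | of_succ k hk ih =>
    refine fun s => h.V_le_of_Q_le hk hpolnn hpolsum fun a => ?_
    calc Q k s a ≤ l k s a + (L - (k + 1 : ℕ)) := h.Q_le_of_V_succ_le hk hPnn hPsum ih s a
      _ ≤ L - k := by push_cast; linarith [hl k hk s a]

theorem Q_le (h : IsValueFunctions L P pol l Q V)
    (hPnn : ∀ k (s : S k) a s', 0 ≤ P k s a s') (hPsum : ∀ k (s : S k) a, ∑ s', P k s a s' = 1)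
    (hpolnn : ∀ k (s : S k) a, 0 ≤ pol k s a) (hpolsum : ∀ k (s : S k), ∑ a, pol k s a = 1)
    (hl : ∀ k, k < L → ∀ (s : S k) a, l k s a ≤ 1) {k : ℕ} (hk : k < L) (s : S k) (a : A) :
    Q k s a ≤ L - k := by
  calc Q k s a ≤ l k s a + (L - (k + 1 : ℕ)) :=
        h.Q_le_of_V_succ_le hk hPnn hPsum (h.V_le hPnn hPsum hpolnn hpolsum hl hk) s a
    _ ≤ L - k := by push_cast; linarith [hl k hk s a]

section OccupancyWeighted

variable {q : ∀ k, S k → A → ℝ}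
  (hqrec : ∀ k, k < L → ∀ (s' : S (k + 1)) (a' : A),
    q (k + 1) s' a' = pol (k + 1) s' a' * ∑ s : S k, ∑ a : A, q k s a * P k s a s')
  (hPnn : ∀ k (s : S k) a s', 0 ≤ P k s a s') (hpolnn : ∀ k (s : S k) a, 0 ≤ pol k s a)
include hqrec hPnn hpolnn

theorem weighted_sum_Q_le_of_V_succ (h : IsValueFunctions L P pol l Q V) {m : ℕ} (hm : m < L)
    (hl : ∀ (t : S m) b, 0 ≤ l m t b) (hql : ∑ t, ∑ b, q m t b * l m t b ≤ 1) {c : ℝ}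
    (hV : ∀ u : S (m + 1) → ℝ, (∀ v, 0 ≤ u v) → (∀ v b, u v * pol (m + 1) v b ≤ q (m + 1) v b) →
      ∑ v, u v * V (m + 1) v ≤ c)
    (u : S m → A → ℝ) (hu0 : ∀ t b, 0 ≤ u t b) (huq : ∀ t b, u t b ≤ q m t b) :
    ∑ t, ∑ b, u t b * Q m t b ≤ 1 + c := by
  have hsplit : ∑ t, ∑ b, u t b * Q m t b = ∑ t, ∑ b, u t b * l m t b +
      ∑ v, (∑ t, ∑ b, u t b * P m t b v) * V (m + 1) v := by
    simp only [h.Q_eq m hm, mul_add, sum_add_distrib, mul_sum, sum_mul]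
    congr 1
    conv_rhs => rw [sum_comm]
    refine sum_congr rfl fun t _ => ?_
    rw [sum_comm]
    simp only [mul_assoc]
  rw [hsplit]
  gcongr ?_ + ?_
  · calc ∑ t, ∑ b, u t b * l m t b ≤ ∑ t, ∑ b, q m t b * l m t b := by
          gcongr with t _ b; exacts [hl t b, huq t b]
      _ ≤ 1 := hql
  · refine hV _ (fun v => sum_nonneg fun t _ => sum_nonneg fun b _ =>
      mul_nonneg (hu0 t b) (hPnn m t b v)) fun v b => ?_
    rw [hqrec m hm v b, mul_comm]
    gcongr with t _ b
    exacts [hpolnn _ v b, hPnn m t b v, huq t b]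

variable (hl : ∀ k, k < L → ∀ (t : S k) b, 0 ≤ l k t b)
  (hql : ∀ k, k < L → ∑ t, ∑ b, q k t b * l k t b ≤ 1)
include hl hql

theorem weighted_sum_V_le (h : IsValueFunctions L P pol l Q V) {m : ℕ} (hm : m ≤ L) :
    ∀ u : S m → ℝ, (∀ t, 0 ≤ u t) → (∀ t b, u t * pol m t b ≤ q m t b) →
      ∑ t, u t * V m t ≤ L - m := by
  induction hm using Nat.decreasingInduction with
  | self => intro u _ _; simp [h.terminal]
  | of_succ m hm ih =>
    intro u hu0 huq
    calc ∑ t, u t * V m t = ∑ t, ∑ b, u t * pol m t b * Q m t b := by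
          simp only [h.V_eq m hm, mul_sum, mul_assoc]
      _ ≤ 1 + (L - (m + 1 : ℕ)) :=
          h.weighted_sum_Q_le_of_V_succ hqrec hPnn hpolnn hm (hl m hm) (hql m hm) ih _
            (fun t b => mul_nonneg (hu0 t) (hpolnn m t b)) huq
      _ = L - m := by push_cast; ring

theorem weighted_sum_Q_le (h : IsValueFunctions L P pol l Q V) {m : ℕ} (hm : m < L)
    (u : S m → A → ℝ) (hu0 : ∀ t b, 0 ≤ u t b) (huq : ∀ t b, u t b ≤ q m t b) :
    ∑ t, ∑ b, u t b * Q m t b ≤ L - m :=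
  calc ∑ t, ∑ b, u t b * Q m t b ≤ 1 + (L - (m + 1 : ℕ)) :=
        h.weighted_sum_Q_le_of_V_succ hqrec hPnn hpolnn hm (hl m hm) (hql m hm)
          (h.weighted_sum_V_le hqrec hPnn hpolnn hl hql hm) u hu0 huq
    _ = L - m := by push_cast; ring

theorem occupancy_mul_Q_le (h : IsValueFunctions L P pol l Q V) {m : ℕ} (hm : m < L)
    (hq : ∀ t b, 0 ≤ q m t b) (s : S m) (a : A) : q m s a * Q m s a ≤ L - m := by
  classical
  have := h.weighted_sum_Q_le hqrec hPnn hpolnn hl hql hm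
    (fun t b => if t = s ∧ b = a then q m s a else 0)
    (fun t b => by split_ifs; exacts [hq s a, le_rfl])
    (fun t b => by split_ifs with hts; exacts [hts.1 ▸ hts.2 ▸ le_rfl, hq t b])
  simpa [ite_and] using this

theorem mul_V_le (h : IsValueFunctions L P pol l Q V) {m : ℕ} (hm : m ≤ L)
    (hq : ∀ t b, 0 ≤ q m t b) {s : S m} {c : ℝ} (hc : 0 ≤ c)
    (hcq : ∀ b, c * pol m s b ≤ q m s b) : c * V m s ≤ L - m := by
  classical
  have := h.weighted_sum_V_le hqrec hPnn hpolnn hl hql hm (fun t => if t = s then c else 0)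
    (fun t => by positivity)
    (fun t b => by split_ifs with hts; exacts [hts ▸ hcq b, by simpa using hq t b])
  simpa using this

end OccupancyWeighted

end IsValueFunctions

theorem occupancy_eq_stateMarginal_mul [DecidableEq (S 0)] {L : ℕ}
    {P : ∀ k, S k → A → S (k + 1) → ℝ} {pol q : ∀ k, S k → A → ℝ} {s0 : S 0}
    (hq0 : ∀ (s : S 0) (a : A), q 0 s a = (if s = s0 then 1 else 0) * pol 0 s a)
    (hqrec : ∀ k, k < L → ∀ (s' : S (k + 1)) (a' : A),
      q (k + 1) s' a' = pol (k + 1) s' a' * ∑ s : S k, ∑ a : A, q k s a * P k s a s')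
    {k : ℕ} (hk : k ≤ L) (s : S k) (a : A) :
    q k s a = stateMarginal (fun s => if s = s0 then 1 else 0)
      (fun j x c u => pol j x c * P j x c u) k s * pol k s a := by
  induction k generalizing a with
  | zero => exact hq0 s a
  | succ k ih =>
    rw [hqrec k hk s a, stateMarginal_succ, mul_comm]
    congr 1
    refine sum_congr rfl fun x _ => sum_congr rfl fun c _ => ?_
    rw [ih (by omega) x c]
    ring

theorem occupancy_mul_le_occupancy [DecidableEq (S 0)] {L : ℕ}
    {P : ∀ k, S k → A → S (k + 1) → ℝ} (hPnn : ∀ k (s : S k) a s', 0 ≤ P k s a s')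
    {pol q : ∀ k, S k → A → ℝ} (hpolnn : ∀ k (s : S k) a, 0 ≤ pol k s a)
    (hpolsum : ∀ k (s : S k), ∑ a, pol k s a = 1) {s0 : S 0}
    (hq0 : ∀ (s : S 0) (a : A), q 0 s a = (if s = s0 then 1 else 0) * pol 0 s a)
    (hqrec : ∀ k, k < L → ∀ (s' : S (k + 1)) (a' : A),
      q (k + 1) s' a' = pol (k + 1) s' a' * ∑ s : S k, ∑ a : A, q k s a * P k s a s')
    {k : ℕ} (hk : k ≤ L) (s : S k) (a b : A) : q k s a * pol k s b ≤ q k s b := by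
  simp only [occupancy_eq_stateMarginal_mul hq0 hqrec hk]
  have hμ := stateMarginal_nonneg (init := fun s => if s = s0 then 1 else 0)
    (fun s => by positivity) (fun j x c u => mul_nonneg (hpolnn j x c) (hPnn j x c u)) k s
  have hπ : pol k s a ≤ 1 := hpolsum k s ▸ single_le_sum (fun c _ => hpolnn k s c) (mem_univ a)
  have := hpolnn k s b
  calc _ ≤ _ * 1 * pol k s b := by gcongr
    _ = _ := by ring

theorem sum_pathWeight_mul_visit_eq_occupancy [DecidableEq A] [∀ k, DecidableEq (S k)] {L : ℕ}
    {P : ∀ k, S k → A → S (k + 1) → ℝ} (hPsum : ∀ k (s : S k) (a : A), ∑ s', P k s a s' = 1)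
    {pol q : ∀ k, S k → A → ℝ} (hpolsum : ∀ k (s : S k), ∑ a, pol k s a = 1) {s0 : S 0}
    (hq0 : ∀ (s : S 0) (a : A), q 0 s a = (if s = s0 then 1 else 0) * pol 0 s a)
    (hqrec : ∀ k, k < L → ∀ (s' : S (k + 1)) (a' : A),
      q (k + 1) s' a' = pol (k + 1) s' a' * ∑ s : S k, ∑ a : A, q k s a * P k s a s')
    {m : ℕ} (hm : m < L) (t : S m) (b : A) :
    ∑ ω : Traj L S A, pathWeight L (fun s => if s = s0 then 1 else 0)
        (fun j x c u => pol j x c * P j x c u) ω *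
        (if ω.1 ⟨m, Nat.lt_succ_of_lt hm⟩ = t ∧ ω.2 ⟨m, hm⟩ = b then 1 else 0) =
      q m t b := by
  have hK : ∀ j (x : S j), ∑ c, ∑ u, pol j x c * P j x c u = 1 := fun j x => by
    simp only [← mul_sum, hPsum, mul_one, hpolsum]
  rw [sum_pathWeight_mul_indicator hm _ _ (fun j _ _ => hK j), ← mul_sum, hPsum, mul_one,
    occupancy_eq_stateMarginal_mul hq0 hqrec hm.le]

end ValueFunctions

section ImportanceWeighting

variable {S : ℕ → Type} {A : Type} {L : ℕ} {q ℓ : ∀ k, S k → A → ℝ}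
  {Ind lhat : Traj L S A → ∀ k, S k → A → ℝ}

theorem lhat_nonneg [DecidableEq A] [∀ k, DecidableEq (S k)]
    (hqpos : ∀ k, k < L → ∀ (s : S k) (a : A), 0 < q k s a)
    (hInd : ∀ (ω : Traj L S A) (k : ℕ) (hk : k < L) (s : S k) (a : A),
      Ind ω k s a = if ω.1 ⟨k, Nat.lt_succ_of_lt hk⟩ = s ∧ ω.2 ⟨k, hk⟩ = a then 1 else 0)
    (hℓ : ∀ k (s : S k) (a : A), ℓ k s a ∈ Set.Icc (0 : ℝ) 1)
    (hlhat : ∀ (ω : Traj L S A) k (s : S k) (a : A),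
      lhat ω k s a = ℓ k s a * Ind ω k s a / q k s a)
    (ω : Traj L S A) (k : ℕ) (hk : k < L) (s : S k) (a : A) : 0 ≤ lhat ω k s a := by
  rw [hlhat, hInd ω k hk]
  have := (hℓ k s a).1
  have := hqpos k hk s a
  positivity

theorem sum_occupancy_mul_lhat_le_one [∀ k, Fintype (S k)] [Fintype A] [DecidableEq A]
    [∀ k, DecidableEq (S k)] (hqpos : ∀ k, k < L → ∀ (s : S k) (a : A), 0 < q k s a)
    (hInd : ∀ (ω : Traj L S A) (k : ℕ) (hk : k < L) (s : S k) (a : A),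
      Ind ω k s a = if ω.1 ⟨k, Nat.lt_succ_of_lt hk⟩ = s ∧ ω.2 ⟨k, hk⟩ = a then 1 else 0)
    (hℓ : ∀ k (s : S k) (a : A), ℓ k s a ∈ Set.Icc (0 : ℝ) 1)
    (hlhat : ∀ (ω : Traj L S A) k (s : S k) (a : A),
      lhat ω k s a = ℓ k s a * Ind ω k s a / q k s a)
    (ω : Traj L S A) (k : ℕ) (hk : k < L) : ∑ s, ∑ a, q k s a * lhat ω k s a ≤ 1 := by
  simp only [hlhat, mul_div_cancel₀ _ (hqpos k hk _ _).ne', hInd ω k hk, mul_ite, mul_one,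
    mul_zero, ite_and]
  simp [(hℓ _ _ _).2]

theorem sum_mul_lhat_le_one [∀ k, Fintype (S k)] [Fintype A]
    (hqpos : ∀ k, k < L → ∀ (s : S k) (a : A), 0 < q k s a)
    (hℓ : ∀ k (s : S k) (a : A), ℓ k s a ∈ Set.Icc (0 : ℝ) 1)
    (hlhat : ∀ (ω : Traj L S A) k (s : S k) (a : A),
      lhat ω k s a = ℓ k s a * Ind ω k s a / q k s a)
    (w : Traj L S A → ℝ) {k : ℕ} (hk : k < L) {s : S k} {a : A}
    (hvisit : ∑ ω, w ω * Ind ω k s a = q k s a) : ∑ ω, w ω * lhat ω k s a ≤ 1 := by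
  calc ∑ ω, w ω * lhat ω k s a = ℓ k s a / q k s a * ∑ ω, w ω * Ind ω k s a := by
        simp only [hlhat, mul_sum]
        exact sum_congr rfl fun ω _ => by ring
    _ ≤ 1 := by rw [hvisit, div_mul_cancel₀ _ (hqpos k hk s a).ne']; exact (hℓ k s a).2

end ImportanceWeighting

theorem sq_sub_mul_add_le {x y π c : ℝ} (hx0 : 0 ≤ x) (hxc : x ≤ c) (hy0 : 0 ≤ y)
    (hyc : π * x + y ≤ c) (hπ0 : 0 ≤ π) (hπ1 : π ≤ 1) :
    (x - (π * x + y)) ^ 2 ≤ c * ((1 - π) ^ 2 * x + y) := by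
  have hy : y ≤ c := by nlinarith
  nlinarith [mul_nonneg (mul_nonneg (sub_nonneg.2 hπ1) hx0) hy0,
    mul_nonneg (sq_nonneg (1 - π)) (mul_nonneg hx0 (sub_nonneg.2 hxc)),
    mul_nonneg hy0 (sub_nonneg.2 hy)]

theorem sum_mul_sq_sub_le {A Ω : Type*} [Fintype A] [Fintype Ω]
    {w : Ω → ℝ} (hw : ∀ ω, 0 ≤ w ω) {π : A → ℝ} (hπ0 : ∀ b, 0 ≤ π b) (hπ1 : ∑ b, π b = 1)
    {X : Ω → A → ℝ} (hX0 : ∀ ω b, 0 ≤ X ω b) {a : A} {q C : ℝ} (hq : 0 < q)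
    {V : Ω → ℝ} (hVX : ∀ ω, V ω = ∑ b, π b * X ω b) (hXa : ∀ ω, q * X ω a ≤ C)
    (hV : ∀ ω, q * V ω ≤ C) (hEX : ∀ b, ∑ ω, w ω * X ω b ≤ C) :
    ∑ ω, w ω * (X ω a - V ω) ^ 2 ≤ 2 * C ^ 2 * (1 - π a) / q := by
  classical
  set Y : Ω → ℝ := fun ω => ∑ b ∈ univ.erase a, π b * X ω b
  have hsplit : ∀ ω, V ω = π a * X ω a + Y ω := fun ω =>
    (hVX ω).trans (add_sum_erase _ _ (mem_univ a)).symm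
  have hπa : π a ≤ 1 := hπ1 ▸ single_le_sum (fun b _ => hπ0 b) (mem_univ a)
  have hC : 0 ≤ C := (sum_nonneg fun ω _ => mul_nonneg (hw ω) (hX0 ω a)).trans (hEX a)
  have hEY : ∑ ω, w ω * Y ω ≤ (1 - π a) * C :=
    calc ∑ ω, w ω * Y ω = ∑ b ∈ univ.erase a, π b * ∑ ω, w ω * X ω b := by
          simp only [Y, mul_sum]
          rw [sum_comm]
          simp only [mul_left_comm]
      _ ≤ ∑ b ∈ univ.erase a, π b * C := by
          gcongr with b; exacts [hπ0 b, hEX b]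
      _ = (1 - π a) * C := by
          rw [← sum_mul, ← hπ1, ← add_sum_erase _ _ (mem_univ a), add_sub_cancel_left]
  have hpoint : ∀ ω, (X ω a - V ω) ^ 2 ≤ C / q * ((1 - π a) ^ 2 * X ω a + Y ω) := by
    intro ω
    rw [hsplit]
    refine sq_sub_mul_add_le (hX0 ω a) ?_ (sum_nonneg fun b _ => mul_nonneg (hπ0 b) (hX0 ω b)) ?_
      (hπ0 a) hπa
    · rw [le_div_iff₀ hq, mul_comm]; exact hXa ω
    · rw [le_div_iff₀ hq, mul_comm, ← hsplit]; exact hV ω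
  calc ∑ ω, w ω * (X ω a - V ω) ^ 2
      ≤ ∑ ω, w ω * (C / q * ((1 - π a) ^ 2 * X ω a + Y ω)) := by
        gcongr with ω; exacts [hw ω, hpoint ω]
    _ = C / q * ((1 - π a) ^ 2 * ∑ ω, w ω * X ω a + ∑ ω, w ω * Y ω) := by
        simp only [mul_sum, ← sum_add_distrib]
        exact sum_congr rfl fun ω _ => by ring
    _ ≤ C / q * ((1 - π a) ^ 2 * C + (1 - π a) * C) := by
        gcongr
        exact hEX a
    _ ≤ 2 * C ^ 2 * (1 - π a) / q := by
        rw [div_mul_eq_mul_div, div_le_div_iff_of_pos_right hq]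
        nlinarith [mul_nonneg (mul_nonneg (sq_nonneg C) (sub_nonneg.2 hπa)) (hπ0 a)]

/-- **Conditional variance bound for the shifted losses.**
In a layered episodic MDP with known transition `P`, policy `pol`, occupancy measure
`q` (with `q k s a > 0`), the trajectory of an episode is drawn from the path measure
`w` induced by `pol` and `P`.  For each trajectory `ω`, `Ind ω` is its visitation
indicator, `lhat ω` the importance-weighted loss estimator built from losses
`ℓ ∈ [0,1]`, and `Qhat ω, Vhat ω` the corresponding estimated value functions of `pol`.
Then `E_t[(Qhat(s,a) − Vhat(s))²] ≤ 2 L² (1 − pol(a|s)) / q(s,a)`. -/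
theorem shifted_loss_variance_bound
    (L : ℕ) (S : ℕ → Type) [∀ k, Fintype (S k)] [∀ k, DecidableEq (S k)]
    (A : Type) [Fintype A] [DecidableEq A]
    (P : ∀ k, S k → A → S (k + 1) → ℝ)
    (hPnn : ∀ k (s : S k) (a : A) (s' : S (k + 1)), 0 ≤ P k s a s')
    (hPsum : ∀ k (s : S k) (a : A), ∑ s' : S (k + 1), P k s a s' = 1)
    (s0 : S 0)
    (pol : ∀ k, S k → A → ℝ)
    (hpolnn : ∀ k (s : S k) (a : A), 0 ≤ pol k s a)
    (hpolsum : ∀ k (s : S k), ∑ a : A, pol k s a = 1)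
    (q : ∀ k, S k → A → ℝ)
    (hq0 : ∀ (s : S 0) (a : A), q 0 s a = (if s = s0 then 1 else 0) * pol 0 s a)
    (hqrec : ∀ k, k < L → ∀ (s' : S (k + 1)) (a' : A),
      q (k + 1) s' a' = pol (k + 1) s' a' * ∑ s : S k, ∑ a : A, q k s a * P k s a s')
    (hqpos : ∀ k, k < L → ∀ (s : S k) (a : A), 0 < q k s a)
    (w : Traj L S A → ℝ)
    (hw : ∀ ω : Traj L S A,
      w ω = (if ω.1 ⟨0, Nat.succ_pos L⟩ = s0 then (1 : ℝ) else 0) *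
        ∏ k : Fin L,
          pol k.1 (ω.1 ⟨k.1, Nat.lt_succ_of_lt k.2⟩) (ω.2 k) *
            P k.1 (ω.1 ⟨k.1, Nat.lt_succ_of_lt k.2⟩) (ω.2 k)
              (ω.1 ⟨k.1 + 1, Nat.succ_lt_succ k.2⟩))
    (Ind : Traj L S A → ∀ k, S k → A → ℝ)
    (hInd : ∀ (ω : Traj L S A) (k : ℕ) (hk : k < L) (s : S k) (a : A),
      Ind ω k s a =
        if ω.1 ⟨k, Nat.lt_succ_of_lt hk⟩ = s ∧ ω.2 ⟨k, hk⟩ = a then 1 else 0)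
    (ℓ : ∀ k, S k → A → ℝ)
    (hℓ : ∀ k (s : S k) (a : A), ℓ k s a ∈ Set.Icc (0 : ℝ) 1)
    (lhat : Traj L S A → ∀ k, S k → A → ℝ)
    (hlhat : ∀ (ω : Traj L S A) k (s : S k) (a : A),
      lhat ω k s a = ℓ k s a * Ind ω k s a / q k s a)
    (Qhat : Traj L S A → ∀ k, S k → A → ℝ) (Vhat : Traj L S A → ∀ k, S k → ℝ)
    (hVhatL : ∀ (ω : Traj L S A) (s : S L), Vhat ω L s = 0)
    (hQhat : ∀ (ω : Traj L S A) k, k < L → ∀ (s : S k) (a : A),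
      Qhat ω k s a = lhat ω k s a + ∑ s' : S (k + 1), P k s a s' * Vhat ω (k + 1) s')
    (hVhat : ∀ (ω : Traj L S A) k, k < L → ∀ s : S k,
      Vhat ω k s = ∑ a : A, pol k s a * Qhat ω k s a)
    (k : ℕ) (hk : k < L) (s : S k) (a : A) :
    ∑ ω : Traj L S A, w ω * (Qhat ω k s a - Vhat ω k s) ^ 2
      ≤ 2 * (L : ℝ) ^ 2 * (1 - pol k s a) / q k s a := by
  have hval : ∀ ω, IsValueFunctions L P pol (lhat ω) (Qhat ω) (Vhat ω) :=
    fun ω => ⟨hVhatL ω, hQhat ω, hVhat ω⟩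
  have hlhat_nn := lhat_nonneg hqpos hInd hℓ hlhat
  have hqlhat_le := sum_occupancy_mul_lhat_le_one hqpos hInd hℓ hlhat
  have hmean : ∀ j, j < L → ∀ t b, ∑ ω, w ω * lhat ω j t b ≤ 1 := fun j hj t b =>
    sum_mul_lhat_le_one hqpos hℓ hlhat w hj <| by
      simp only [hw, hInd _ j hj]
      exact sum_pathWeight_mul_visit_eq_occupancy hPsum hpolsum hq0 hqrec hj t b
  have hwnn : ∀ ω, 0 ≤ w ω := fun ω => (hw ω).trans_ge <|
    pathWeight_nonneg (init := fun s => if s = s0 then 1 else 0) (fun _ => by positivity)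
      (fun j x c u => mul_nonneg (hpolnn j x c) (hPnn j x c u)) ω
  refine sum_mul_sq_sub_le hwnn (hpolnn k s) (hpolsum k s)
    (fun ω b => (hval ω).Q_nonneg hPnn hpolnn (hlhat_nn ω) hk s b) (hqpos k hk s a)
    (fun ω => hVhat ω k hk s) (fun ω => ?_) (fun ω => ?_) (fun b => ?_)
  · exact ((hval ω).occupancy_mul_Q_le hqrec hPnn hpolnn (hlhat_nn ω) (hqlhat_le ω) hk
      (fun t b => (hqpos k hk t b).le) s a).trans (sub_le_self _ k.cast_nonneg)
  · exact ((hval ω).mul_V_le hqrec hPnn hpolnn (hlhat_nn ω) (hqlhat_le ω) hk.le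
      (fun t b => (hqpos k hk t b).le) (hqpos k hk s a).le
      (occupancy_mul_le_occupancy hPnn hpolnn hpolsum hq0 hqrec hk.le s a)).trans
      (sub_le_self _ k.cast_nonneg)
  · exact ((IsValueFunctions.sum hval w).Q_le hPnn hPsum hpolnn hpolsum hmean hk s b).trans
      (sub_le_self _ k.cast_nonneg)
end

section
/- Let (m_i)_{i=1}^{N+1} be nonnegative integers with m_1 = 0 satisfying m_{i+1} ≤ 2 m_i whenever m_i ≥ 1, and m_{i+1} ≤ m_i + 1 allowed otherwise (counters increase by visits), with m_{N+1} ≤ T. Then Σ_{i=1}^{N} (m_{i+1} − m_i)/max{m_i, 1} ≤ 2(2 ln T + 1). -/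
open Finset

/-!
The potential `Φ n = 2 log n + [n ≥ 1]` pays for every term: a step `0 → n ≤ 1` costs at most
`1`, which is what the indicator provides, and a step `a → b` with `1 ≤ a ≤ b ≤ 2a` costs
`(b - a)/a ≤ 2 (b - a)/b ≤ 2 log (b/a)`. Telescoping gives `Φ (m (N+1)) - Φ (m 1) ≤ 2 log T + 1`.
-/

noncomputable def countPotential (n : ℕ) : ℝ :=
  2 * Real.log n + if 1 ≤ n then 1 else 0

lemma countPotential_zero : countPotential 0 = 0 := by
  simp [countPotential]

lemma countPotential_le_of_le {n T : ℕ} (hnT : n ≤ T) :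
    countPotential n ≤ 2 * Real.log T + 1 := by
  have hlog : Real.log n ≤ Real.log T := by
    rcases Nat.eq_zero_or_pos n with rfl | hn
    · simpa using Real.log_natCast_nonneg T
    · exact Real.log_le_log (by exact_mod_cast hn) (by exact_mod_cast hnT)
  unfold countPotential
  split_ifs <;> linarith

lemma sub_div_le_two_mul_log_sub {a b : ℝ} (ha : 0 < a) (hab : a ≤ b) (hb : b ≤ 2 * a) :
    (b - a) / a ≤ 2 * (Real.log b - Real.log a) := by
  have hb0 : 0 < b := ha.trans_le hab
  have hlog : 1 - a / b ≤ Real.log b - Real.log a := by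
    have h := Real.log_le_sub_one_of_pos (div_pos ha hb0)
    rw [Real.log_div ha.ne' hb0.ne'] at h
    linarith
  calc (b - a) / a ≤ 2 * (b - a) / b := by
        rw [div_le_div_iff₀ ha hb0]; nlinarith
    _ = 2 * (1 - a / b) := by field_simp
    _ ≤ 2 * (Real.log b - Real.log a) := by linarith

lemma increment_div_le_countPotential_sub {a b : ℕ} (hab : a ≤ b)
    (hdouble : 1 ≤ a → b ≤ 2 * a) (hzero : a = 0 → b ≤ 1) :
    ((b : ℝ) - a) / max (a : ℝ) 1 ≤ countPotential b - countPotential a := by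
  rcases Nat.eq_zero_or_pos a with rfl | (ha : 1 ≤ a)
  · have := hzero rfl
    interval_cases b <;> norm_num [countPotential]
  · have hb : 1 ≤ b := le_trans ha hab
    have ha' : (1 : ℝ) ≤ a := by exact_mod_cast ha
    rw [max_eq_left ha', countPotential, countPotential, if_pos hb, if_pos ha]
    have := sub_div_le_two_mul_log_sub (a := a) (b := b) (by linarith) (by exact_mod_cast hab)
      (by exact_mod_cast hdouble ha)
    linarith

/-- Counter-increment summation bound: with `m 1 = 0`, `m` nondecreasing,
`m (i+1) ≤ 2 m i` whenever `m i ≥ 1`, `m (i+1) ≤ 1` whenever `m i = 0`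
(for `1 ≤ i ≤ N`), and `m (N+1) ≤ T`, we have
`Σ_{i=1}^{N} (m_{i+1} − m_i)/max{m_i,1} ≤ 2 (2 ln T + 1)`. -/
theorem inverse_count_sum_bound
    (N T : ℕ) (m : ℕ → ℕ)
    (h1 : m 1 = 0)
    (hmono : ∀ i, m i ≤ m (i + 1))
    (hdouble : ∀ i, 1 ≤ i → i ≤ N → 1 ≤ m i → m (i + 1) ≤ 2 * m i)
    (hzero : ∀ i, 1 ≤ i → i ≤ N → m i = 0 → m (i + 1) ≤ 1)
    (hT : m (N + 1) ≤ T) :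
    ∑ i ∈ Finset.Icc 1 N, ((m (i + 1) : ℝ) - (m i : ℝ)) / max (m i : ℝ) 1
      ≤ 2 * (2 * Real.log T + 1) := by
  have hterm : ∀ i ∈ Icc 1 N, ((m (i + 1) : ℝ) - m i) / max (m i : ℝ) 1
      ≤ countPotential (m (i + 1)) - countPotential (m i) := fun i hi => by
    obtain ⟨hi1, hiN⟩ := mem_Icc.mp hi
    exact increment_div_le_countPotential_sub (hmono i) (hdouble i hi1 hiN) (hzero i hi1 hiN)
  have htelescope : ∑ i ∈ Icc 1 N, (countPotential (m (i + 1)) - countPotential (m i))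
      = countPotential (m (N + 1)) - countPotential (m 1) := by
    rw [← Ico_add_one_right_eq_Icc]
    exact sum_Ico_sub (f := fun i => countPotential (m i)) (by omega)
  have hlogT : 0 ≤ Real.log T := Real.log_natCast_nonneg T
  calc ∑ i ∈ Icc 1 N, ((m (i + 1) : ℝ) - m i) / max (m i : ℝ) 1
      ≤ countPotential (m (N + 1)) - countPotential (m 1) := htelescope ▸ sum_le_sum hterm
    _ ≤ 2 * Real.log T + 1 := by
        rw [h1, countPotential_zero, sub_zero]; exact countPotential_le_of_le hT
    _ ≤ 2 * (2 * Real.log T + 1) := by linarith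
end

section
/- Let (m_i)_{i=1}^{N+1} be nonnegative integers with m_1 = 0, m_{i+1} ≤ 2 m_i whenever m_i ≥ 1, and m_{N+1} ≤ T. Then Σ_{i=1}^{N} (m_{i+1} − m_i)/√(max{m_i, 1}) ≤ 2(2√(m_{N+1}) + 1) ≤ 2(2√T + 1). -/
/-! Writing `b - a = (√b - √a)(√b + √a)`, a step with `a ≤ b ≤ 2a` satisfies
`(b - a)/√a ≤ (1 + √2)(√b - √a) ≤ 4(√b - √a)`, and a step from `a = 0` to
`b ≤ 1` costs `b ≤ 4√b`. The sum is therefore dominated by a telescoping sum equal to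
`4√(m (N+1))`. -/

open Finset Real

lemma sub_div_sqrt_le_of_le_nine_mul {a b : ℝ} (ha : 0 < a) (hab : a ≤ b) (hb : b ≤ 9 * a) :
    (b - a) / √a ≤ 4 * (√b - √a) := by
  have hsa : 0 < √a := sqrt_pos.2 ha
  have hsb : √b ≤ 3 * √a := by
    calc √b ≤ √(3 ^ 2 * a) := sqrt_le_sqrt (by linarith)
      _ = 3 * √a := by rw [sqrt_mul (by norm_num), sqrt_sq (by norm_num)]
  have hdiff : 0 ≤ √b - √a := sub_nonneg.2 (sqrt_le_sqrt hab)
  have hfactor : b - a = (√b - √a) * (√b + √a) := by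
    linear_combination sq_sqrt ha.le - sq_sqrt (ha.le.trans hab)
  rw [div_le_iff₀ hsa, hfactor]
  nlinarith

lemma sub_div_sqrt_max_one_le {a b : ℕ} (hab : a ≤ b) (hzero : a = 0 → b ≤ 1)
    (hdouble : 1 ≤ a → b ≤ 2 * a) :
    ((b : ℝ) - a) / √(max (a : ℝ) 1) ≤ 4 * (√b - √a) := by
  rcases Nat.eq_zero_or_pos a with rfl | hpos
  · have hb : (b : ℝ) ≤ 1 := by exact_mod_cast hzero rfl
    have hb0 : (0 : ℝ) ≤ b := Nat.cast_nonneg b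
    have hb_le_sqrt : (b : ℝ) ≤ √b := (le_sqrt hb0 hb0).2 (by nlinarith)
    simp only [Nat.cast_zero, sqrt_zero, sub_zero, zero_le_one, max_eq_right, sqrt_one, div_one]
    linarith [sqrt_nonneg b]
  · have ha : (1 : ℝ) ≤ a := by exact_mod_cast hpos
    have hb : (b : ℝ) ≤ 2 * a := by exact_mod_cast hdouble hpos
    rw [max_eq_left ha]
    exact sub_div_sqrt_le_of_le_nine_mul (by linarith) (by exact_mod_cast hab) (by linarith)

/-- Square-root counter summation bound: with `m 1 = 0`, `m` nondecreasing,
`m (i+1) ≤ 2 m i` whenever `m i ≥ 1`, `m (i+1) ≤ 1` whenever `m i = 0`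
(for `1 ≤ i ≤ N`), and `m (N+1) ≤ T`, we have
`Σ_{i=1}^{N} (m_{i+1} − m_i)/√(max{m_i,1}) ≤ 2(2√(m_{N+1}) + 1) ≤ 2(2√T + 1)`. -/
theorem sqrt_count_sum_bound
    (N T : ℕ) (m : ℕ → ℕ)
    (h1 : m 1 = 0)
    (hmono : ∀ i, m i ≤ m (i + 1))
    (hdouble : ∀ i, 1 ≤ i → i ≤ N → 1 ≤ m i → m (i + 1) ≤ 2 * m i)
    (hzero : ∀ i, 1 ≤ i → i ≤ N → m i = 0 → m (i + 1) ≤ 1)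
    (hT : m (N + 1) ≤ T) :
    (∑ i ∈ Finset.Icc 1 N, ((m (i + 1) : ℝ) - (m i : ℝ)) / Real.sqrt (max (m i : ℝ) 1)
        ≤ 2 * (2 * Real.sqrt ((m (N + 1) : ℝ)) + 1))
      ∧ 2 * (2 * Real.sqrt ((m (N + 1) : ℝ)) + 1) ≤ 2 * (2 * Real.sqrt (T : ℝ) + 1) := by
  constructor
  · calc ∑ i ∈ Icc 1 N, ((m (i + 1) : ℝ) - m i) / √(max (m i : ℝ) 1)
        ≤ ∑ i ∈ Icc 1 N, 4 * (√(m (i + 1) : ℝ) - √(m i : ℝ)) := by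
          refine sum_le_sum fun i hi => ?_
          obtain ⟨hi1, hiN⟩ := mem_Icc.1 hi
          exact sub_div_sqrt_max_one_le (hmono i) (hzero i hi1 hiN) (hdouble i hi1 hiN)
      _ = 4 * √(m (N + 1) : ℝ) := by
          rw [← mul_sum, ← Ico_add_one_right_eq_Icc, sum_Ico_sub (fun i => √(m i : ℝ)) (by omega),
            h1, Nat.cast_zero, sqrt_zero, sub_zero]
      _ ≤ 2 * (2 * √(m (N + 1) : ℝ) + 1) := by linarith
  · gcongr
end

section
/- Let P₁ and P₂ be two layered transition functions on the same layered state space, π a policy, and q₁ = q^{P₁,π}, q₂ = q^{P₂,π} the corresponding occupancy measures. Then for every state s in layer k(s): q₁(s) − q₂(s) = Σ_{k=0}^{k(s)−1} Σ_{u ∈ S_k} Σ_{v ∈ A} Σ_{w ∈ S_{k+1}} q₁(u,v)·(P₁(w|u,v) − P₂(w|u,v))·q₂(s|w), where q₂(s|w) is the conditional probability of reaching s from w under π and P₂ (and symmetrically with the roles of q₁, q₂ exchanged on the right-hand side). -/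
/-!
Write `c(s|w)` for the probability of reaching `s` from `w`. Then
`q₁(s) - c₂(s|s₀) = ∑_{k < K} (∑_w q₁(w) c₂(s|w) at layer k+1 − the same at layer k)`,
a telescoping sum whose ends are `q₁(s)` (as `c₂(s|s) = 1`) and `c₂(s|s₀) = q₂(s)` (as `q₁` is the
point mass at `s₀` on layer 0). Expanding `q₁` forward and `c₂(s|·)` backward by one step, the
`k`-th term is `∑_{u,v,w} q₁(u) π(v|u) (P₁ − P₂)(w|u,v) c₂(s|w)`. Exchanging the two transitions
gives the symmetric formula.
-/

open Finset

variable {R : Type*} [CommRing R] {L : ℕ} {S : ℕ → Type} [∀ k, Fintype (S k)]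
  [∀ k, DecidableEq (S k)] {A : Type} [Fintype A]

structure IsOccupancyMeasure (L : ℕ) (P : ∀ k, S k → A → S (k + 1) → R)
    (pol : ∀ k, S k → A → R) (s0 : S 0) (q : ∀ k, S k → R) : Prop where
  zero : ∀ s : S 0, q 0 s = if s = s0 then 1 else 0
  succ : ∀ k, k < L → ∀ s' : S (k + 1),
    q (k + 1) s' = ∑ u : S k, ∑ v : A, q k u * pol k u v * P k u v s'

/-- `c k k' w s` is the probability of reaching `s ∈ S k'` from `w ∈ S k`. -/
structure IsConditionalOccupancy (L : ℕ) (P : ∀ k, S k → A → S (k + 1) → R)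
    (pol : ∀ k, S k → A → R) (c : ∀ k k', S k → S k' → R) : Prop where
  refl : ∀ k (w s : S k), c k k w s = if w = s then 1 else 0
  succ : ∀ k k', k ≤ k' → k' < L → ∀ (w : S k) (s : S (k' + 1)),
    c k (k' + 1) w s = ∑ u : S k', c k k' w u * ∑ v : A, pol k' u v * P k' u v s

namespace IsConditionalOccupancy

variable {P : ∀ k, S k → A → S (k + 1) → R} {pol : ∀ k, S k → A → R}
  {c : ∀ k k', S k → S k' → R}

theorem eq_sum_step_mul (hc : IsConditionalOccupancy L P pol c) {k K : ℕ} (hk : k < K)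
    (hK : K ≤ L) (w : S k) (s : S K) :
    c k K w s = ∑ w' : S (k + 1), (∑ v : A, pol k w v * P k w v w') * c (k + 1) K w' s := by
  induction K, hk using Nat.le_induction with
  | base => simp [hc.succ k k le_rfl hK w s, hc.refl, ite_mul]
  | succ K hkK ih =>
    calc c k (K + 1) w s
        = ∑ u : S K, (∑ w' : S (k + 1), (∑ v : A, pol k w v * P k w v w') * c (k + 1) K w' u)
            * ∑ v : A, pol K u v * P K u v s := by
          rw [hc.succ k K (by omega) hK w s]
          exact sum_congr rfl fun u _ => by rw [ih (by omega) u]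
      _ = ∑ w' : S (k + 1), (∑ v : A, pol k w v * P k w v w')
            * ∑ u : S K, c (k + 1) K w' u * ∑ v : A, pol K u v * P K u v s := by
          simp only [sum_mul _ _ (∑ v : A, pol K _ v * P K _ v s)]
          rw [sum_comm]
          refine sum_congr rfl fun w' _ => ?_
          rw [mul_sum]
          exact sum_congr rfl fun u _ => mul_assoc _ _ _
      _ = _ := by simp only [hc.succ (k + 1) K hkK hK]

end IsConditionalOccupancy

namespace IsOccupancyMeasure

variable {P Pc : ∀ k, S k → A → S (k + 1) → R} {pol : ∀ k, S k → A → R} {s0 : S 0}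
  {q : ∀ k, S k → R} {c : ∀ k k', S k → S k' → R}

theorem eq_conditionalOccupancy (hq : IsOccupancyMeasure L P pol s0 q)
    (hc : IsConditionalOccupancy L P pol c) {K : ℕ} (hK : K ≤ L) (s : S K) :
    q K s = c 0 K s0 s := by
  induction K with
  | zero => simp [hq.zero, hc.refl, eq_comm]
  | succ K ih =>
    rw [hq.succ K hK s, hc.succ 0 K K.zero_le hK s0 s]
    refine sum_congr rfl fun u _ => ?_
    rw [← ih (by omega) u, mul_sum]
    exact sum_congr rfl fun v _ => by ring

theorem sum_succ_mul_conditionalOccupancy (hq : IsOccupancyMeasure L P pol s0 q) {k : ℕ}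
    (hk : k < L) (f : S (k + 1) → R) :
    ∑ w : S (k + 1), q (k + 1) w * f w
      = ∑ u : S k, ∑ v : A, ∑ w : S (k + 1), q k u * pol k u v * P k u v w * f w := by
  simp only [hq.succ k hk, sum_mul]
  rw [sum_comm]
  exact sum_congr rfl fun u _ => sum_comm

theorem sub_conditionalOccupancy_eq_sum (hq : IsOccupancyMeasure L P pol s0 q)
    (hc : IsConditionalOccupancy L Pc pol c) {K : ℕ} (hK : K ≤ L) (s : S K) :
    q K s - c 0 K s0 s
      = ∑ k ∈ range K, ∑ u : S k, ∑ v : A, ∑ w : S (k + 1),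
          q k u * pol k u v * (P k u v w - Pc k u v w) * c (k + 1) K w s := by
  set f : ℕ → R := fun k => ∑ w : S k, q k w * c k K w s
  have hfK : f K = q K s := by simp [f, hc.refl, mul_ite]
  have hf0 : f 0 = c 0 K s0 s := by simp [f, hq.zero, ite_mul]
  have hforward (k : ℕ) (hk : k < K) : f (k + 1) = ∑ u : S k, ∑ v : A, ∑ w : S (k + 1),
      q k u * pol k u v * P k u v w * c (k + 1) K w s :=
    hq.sum_succ_mul_conditionalOccupancy (by omega) _
  have hbackward (k : ℕ) (hk : k < K) : f k = ∑ u : S k, ∑ v : A, ∑ w : S (k + 1),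
      q k u * pol k u v * Pc k u v w * c (k + 1) K w s := by
    refine sum_congr rfl fun u _ => ?_
    simp only [hc.eq_sum_step_mul hk hK u s, mul_sum, sum_mul]
    rw [sum_comm]
    exact sum_congr rfl fun w _ => sum_congr rfl fun v _ => by ring
  rw [← hfK, ← hf0, ← sum_range_sub f K]
  refine sum_congr rfl fun k hk => ?_
  rw [hforward k (mem_range.1 hk), hbackward k (mem_range.1 hk)]
  simp only [← sum_sub_distrib]
  exact sum_congr rfl fun u _ => sum_congr rfl fun v _ => sum_congr rfl fun w _ => by ring

end IsOccupancyMeasure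

theorem occupancy_measure_difference_general
    (L : ℕ) (S : ℕ → Type) [∀ k, Fintype (S k)] [∀ k, DecidableEq (S k)]
    (A : Type) [Fintype A]
    (P1 P2 : ∀ k, S k → A → S (k + 1) → ℝ)
    (s0 : S 0)
    (pol : ∀ k, S k → A → ℝ)
    (q1 q2 : ∀ k, S k → ℝ)
    (hq1_0 : ∀ s : S 0, q1 0 s = if s = s0 then 1 else 0)
    (hq2_0 : ∀ s : S 0, q2 0 s = if s = s0 then 1 else 0)
    (hq1rec : ∀ k, k < L → ∀ s' : S (k + 1),
      q1 (k + 1) s' = ∑ u : S k, ∑ v : A, q1 k u * pol k u v * P1 k u v s')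
    (hq2rec : ∀ k, k < L → ∀ s' : S (k + 1),
      q2 (k + 1) s' = ∑ u : S k, ∑ v : A, q2 k u * pol k u v * P2 k u v s')
    (c1 c2 : ∀ k k', S k → S k' → ℝ)
    (hc1base : ∀ k (w s : S k), c1 k k w s = if w = s then 1 else 0)
    (hc2base : ∀ k (w s : S k), c2 k k w s = if w = s then 1 else 0)
    (hc1rec : ∀ k k', k ≤ k' → k' < L → ∀ (w : S k) (s : S (k' + 1)),
      c1 k (k' + 1) w s = ∑ u : S k', c1 k k' w u * ∑ v : A, pol k' u v * P1 k' u v s)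
    (hc2rec : ∀ k k', k ≤ k' → k' < L → ∀ (w : S k) (s : S (k' + 1)),
      c2 k (k' + 1) w s = ∑ u : S k', c2 k k' w u * ∑ v : A, pol k' u v * P2 k' u v s) :
    ∀ K, K ≤ L → ∀ s : S K,
      (q1 K s - q2 K s
          = ∑ k ∈ Finset.range K, ∑ u : S k, ∑ v : A, ∑ w' : S (k + 1),
              q1 k u * pol k u v * (P1 k u v w' - P2 k u v w') * c2 (k + 1) K w' s)
        ∧ q1 K s - q2 K s
          = ∑ k ∈ Finset.range K, ∑ u : S k, ∑ v : A, ∑ w' : S (k + 1),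
              q2 k u * pol k u v * (P1 k u v w' - P2 k u v w') * c1 (k + 1) K w' s := by
  intro K hK s
  have hq1 : IsOccupancyMeasure L P1 pol s0 q1 := ⟨hq1_0, hq1rec⟩
  have hq2 : IsOccupancyMeasure L P2 pol s0 q2 := ⟨hq2_0, hq2rec⟩
  have hc1 : IsConditionalOccupancy L P1 pol c1 := ⟨hc1base, hc1rec⟩
  have hc2 : IsConditionalOccupancy L P2 pol c2 := ⟨hc2base, hc2rec⟩
  constructor
  · rw [hq2.eq_conditionalOccupancy hc2 hK]
    exact hq1.sub_conditionalOccupancy_eq_sum hc2 hK s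
  · have h := hq2.sub_conditionalOccupancy_eq_sum hc1 hK s
    rw [← hq1.eq_conditionalOccupancy hc1 hK] at h
    simp only [← neg_sub (P1 _ _ _ _), mul_neg, neg_mul, sum_neg_distrib] at h
    linarith

/-- **Occupancy measure difference.** For two layered transitions `P1, P2` and a
policy `pol`, with state occupancies `q1 = q^{P1,pol}`, `q2 = q^{P2,pol}` and
conditional occupancies `c1(s|w)` (under `P1`) and `c2(s|w)` (under `P2`), for every
state `s` in layer `K`:
`q1(s) − q2(s) = Σ_{k<K} Σ_{u,v,w} q1(u,v)(P1(w|u,v) − P2(w|u,v)) c2(s|w)`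
and symmetrically with the roles of `q1, q2` (and `c1, c2`) exchanged on the
right-hand side. -/
theorem occupancy_measure_difference
    (L : ℕ) (S : ℕ → Type) [∀ k, Fintype (S k)] [∀ k, DecidableEq (S k)]
    (A : Type) [Fintype A]
    (P1 P2 : ∀ k, S k → A → S (k + 1) → ℝ)
    (hP1nn : ∀ k (s : S k) (a : A) (s' : S (k + 1)), 0 ≤ P1 k s a s')
    (hP1sum : ∀ k (s : S k) (a : A), ∑ s' : S (k + 1), P1 k s a s' = 1)
    (hP2nn : ∀ k (s : S k) (a : A) (s' : S (k + 1)), 0 ≤ P2 k s a s')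
    (hP2sum : ∀ k (s : S k) (a : A), ∑ s' : S (k + 1), P2 k s a s' = 1)
    (s0 : S 0)
    (pol : ∀ k, S k → A → ℝ)
    (hpolnn : ∀ k (s : S k) (a : A), 0 ≤ pol k s a)
    (hpolsum : ∀ k (s : S k), ∑ a : A, pol k s a = 1)
    (q1 q2 : ∀ k, S k → ℝ)
    (hq1_0 : ∀ s : S 0, q1 0 s = if s = s0 then 1 else 0)
    (hq2_0 : ∀ s : S 0, q2 0 s = if s = s0 then 1 else 0)
    (hq1rec : ∀ k, k < L → ∀ s' : S (k + 1),
      q1 (k + 1) s' = ∑ u : S k, ∑ v : A, q1 k u * pol k u v * P1 k u v s')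
    (hq2rec : ∀ k, k < L → ∀ s' : S (k + 1),
      q2 (k + 1) s' = ∑ u : S k, ∑ v : A, q2 k u * pol k u v * P2 k u v s')
    (c1 c2 : ∀ k k', S k → S k' → ℝ)
    (hc1base : ∀ k (w s : S k), c1 k k w s = if w = s then 1 else 0)
    (hc2base : ∀ k (w s : S k), c2 k k w s = if w = s then 1 else 0)
    (hc1rec : ∀ k k', k ≤ k' → k' < L → ∀ (w : S k) (s : S (k' + 1)),
      c1 k (k' + 1) w s = ∑ u : S k', c1 k k' w u * ∑ v : A, pol k' u v * P1 k' u v s)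
    (hc2rec : ∀ k k', k ≤ k' → k' < L → ∀ (w : S k) (s : S (k' + 1)),
      c2 k (k' + 1) w s = ∑ u : S k', c2 k k' w u * ∑ v : A, pol k' u v * P2 k' u v s) :
    ∀ K, K ≤ L → ∀ s : S K,
      (q1 K s - q2 K s
          = ∑ k ∈ Finset.range K, ∑ u : S k, ∑ v : A, ∑ w' : S (k + 1),
              q1 k u * pol k u v * (P1 k u v w' - P2 k u v w') * c2 (k + 1) K w' s)
        ∧ q1 K s - q2 K s
          = ∑ k ∈ Finset.range K, ∑ u : S k, ∑ v : A, ∑ w' : S (k + 1),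
              q2 k u * pol k u v * (P1 k u v w' - P2 k u v w') * c1 (k + 1) K w' s :=
  occupancy_measure_difference_general L S A P1 P2 s0 pol q1 q2 hq1_0 hq2_0 hq1rec hq2rec c1 c2
    hc1base hc2base hc1rec hc2rec
end

section
/- In a layered episodic MDP, for any policy π and any deterministic policy π⋆ : S → A, and for each layer k: Σ_{s ∈ S_k} Σ_{a = π⋆(s)} (q_π(s,a) − q⋆_π(s,a)) ≤ Σ_{s ≠ s_L} Σ_{a ≠ π⋆(s)} q_π(s,a), where q_π is the occupancy measure of π under the true transition P, and q⋆_π(s,a) is the probability under π of reaching (s,a) via a trajectory that followed π⋆'s actions at every earlier layer. -/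
/-!
Write `m k s = ∑ a, q k s a` for the state occupancy. Since `q k s a = π(a|s) · m k s` and
`q⋆ k s a = π(a|s) · pr k s`, the claim reduces to bounding the total gap `∑ s, (m k s - pr k s)`,
which is nonnegative state by state. Pushing layer `k` forward through `P` preserves total mass, so
the gap at layer `k + 1` is `∑ s, π(π⋆ s|s) (m k s - pr k s)` plus the mass of the actions
`a ≠ π⋆ s` at layer `k`: the gap grows at most by the off-`π⋆` occupancy of each layer
(the union bound of the paper).
-/

open Finset

lemma sum_sum_mul_eq_sum_of_mem_stdSimplex {α β : Type*} [Fintype α] [Fintype β]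
    {Q : α → β → ℝ} (hQ : ∀ a, Q a ∈ stdSimplex ℝ β) (w : α → ℝ) :
    ∑ b, ∑ a, w a * Q a b = ∑ a, w a := by
  rw [sum_comm]
  simp only [← mul_sum, (hQ _).2, mul_one]

section LayeredMDP

variable {L : ℕ} {S : ℕ → Type} [∀ k, Fintype (S k)] [DecidableEq (S 0)] {A : Type}
  {P : ∀ k, S k → A → S (k + 1) → ℝ} {pol : ∀ k, S k → A → ℝ} {s0 : S 0}
  {pstar : ∀ k, S k → A} {pr : ∀ k, S k → ℝ}

/-- `pr k s` is the probability under `pol` of reaching `s` having played `pstar` at every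
earlier layer. -/
structure IsAgreeingReachProb (L : ℕ) (P : ∀ k, S k → A → S (k + 1) → ℝ)
    (pol : ∀ k, S k → A → ℝ) (s0 : S 0) (pstar : ∀ k, S k → A) (pr : ∀ k, S k → ℝ) : Prop where
  zero : ∀ s, pr 0 s = if s = s0 then 1 else 0
  succ : ∀ k < L, ∀ s', pr (k + 1) s' = ∑ u, pr k u * pol k u (pstar k u) * P k u (pstar k u) s'

lemma IsAgreeingReachProb.sum_succ (hP : ∀ k s a, P k s a ∈ stdSimplex ℝ (S (k + 1)))
    (hpr : IsAgreeingReachProb L P pol s0 pstar pr) {k : ℕ} (hk : k < L) :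
    ∑ s', pr (k + 1) s' = ∑ u, pol k u (pstar k u) * pr k u := by
  rw [sum_congr rfl fun s' _ => hpr.succ k hk s',
    sum_sum_mul_eq_sum_of_mem_stdSimplex fun u => hP k u (pstar k u)]
  exact sum_congr rfl fun u _ => mul_comm _ _

variable [Fintype A] {q : ∀ k, S k → A → ℝ}

structure IsOccupancy (L : ℕ) (P : ∀ k, S k → A → S (k + 1) → ℝ) (pol : ∀ k, S k → A → ℝ)
    (s0 : S 0) (q : ∀ k, S k → A → ℝ) : Prop where
  zero : ∀ s a, q 0 s a = (if s = s0 then 1 else 0) * pol 0 s a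
  succ : ∀ k < L, ∀ s' a', q (k + 1) s' a' = pol (k + 1) s' a' * ∑ s, ∑ a, q k s a * P k s a s'

def stateOccupancy (q : ∀ k, S k → A → ℝ) (k : ℕ) (s : S k) : ℝ := ∑ a, q k s a

namespace IsOccupancy

lemma stateOccupancy_zero (hpol : ∀ k s, pol k s ∈ stdSimplex ℝ A)
    (hq : IsOccupancy L P pol s0 q) (s : S 0) :
    stateOccupancy q 0 s = if s = s0 then 1 else 0 := by
  simp only [stateOccupancy, hq.zero, ← mul_sum, (hpol 0 s).2, mul_one]

lemma stateOccupancy_succ (hpol : ∀ k s, pol k s ∈ stdSimplex ℝ A)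
    (hq : IsOccupancy L P pol s0 q) {k : ℕ} (hk : k < L) (s' : S (k + 1)) :
    stateOccupancy q (k + 1) s' = ∑ u, ∑ a, q k u a * P k u a s' := by
  simp only [stateOccupancy, hq.succ k hk, ← sum_mul, (hpol _ s').2, one_mul]

lemma eq_mul_stateOccupancy (hpol : ∀ k s, pol k s ∈ stdSimplex ℝ A)
    (hq : IsOccupancy L P pol s0 q) {k : ℕ} (hk : k ≤ L) (s : S k) (a : A) :
    q k s a = pol k s a * stateOccupancy q k s := by
  cases k with
  | zero => rw [hq.zero, hq.stateOccupancy_zero hpol, mul_comm]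
  | succ k => rw [hq.succ k hk, hq.stateOccupancy_succ hpol hk]

lemma sum_stateOccupancy_succ (hP : ∀ k s a, P k s a ∈ stdSimplex ℝ (S (k + 1)))
    (hpol : ∀ k s, pol k s ∈ stdSimplex ℝ A) (hq : IsOccupancy L P pol s0 q) {k : ℕ}
    (hk : k < L) : ∑ s', stateOccupancy q (k + 1) s' = ∑ u, stateOccupancy q k u := by
  simp only [hq.stateOccupancy_succ hpol hk]
  rw [sum_comm]
  exact sum_congr rfl fun u _ => sum_sum_mul_eq_sum_of_mem_stdSimplex (hP k u) (q k u)

lemma nonneg (hP : ∀ k s a, P k s a ∈ stdSimplex ℝ (S (k + 1)))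
    (hpol : ∀ k s, pol k s ∈ stdSimplex ℝ A) (hq : IsOccupancy L P pol s0 q) {k : ℕ}
    (hk : k ≤ L) (s : S k) (a : A) : 0 ≤ q k s a := by
  induction k generalizing a with
  | zero =>
    rw [hq.zero]
    exact mul_nonneg (by split_ifs <;> norm_num) ((hpol 0 s).1 a)
  | succ k ih =>
    rw [hq.succ k hk]
    exact mul_nonneg ((hpol _ s).1 a) <| sum_nonneg fun u _ => sum_nonneg fun b _ =>
      mul_nonneg (ih (Nat.le_of_succ_le hk) u b) ((hP k u b).1 s)

end IsOccupancy

namespace IsAgreeingReachProb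

lemma le_stateOccupancy (hP : ∀ k s a, P k s a ∈ stdSimplex ℝ (S (k + 1)))
    (hpol : ∀ k s, pol k s ∈ stdSimplex ℝ A) (hq : IsOccupancy L P pol s0 q)
    (hpr : IsAgreeingReachProb L P pol s0 pstar pr) {k : ℕ} (hk : k ≤ L) (s : S k) :
    pr k s ≤ stateOccupancy q k s := by
  induction k with
  | zero => rw [hpr.zero, hq.stateOccupancy_zero hpol]
  | succ k ih =>
    have hk' : k ≤ L := Nat.le_of_succ_le hk
    rw [hpr.succ k hk, hq.stateOccupancy_succ hpol hk]
    refine sum_le_sum fun u _ => ?_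
    calc pr k u * pol k u (pstar k u) * P k u (pstar k u) s
        ≤ q k u (pstar k u) * P k u (pstar k u) s := by
          rw [hq.eq_mul_stateOccupancy hpol hk', mul_comm (pol _ _ _)]
          gcongr
          · exact (hP k u _).1 s
          · exact (hpol k u).1 _
          · exact ih hk' u
      _ ≤ ∑ a, q k u a * P k u a s :=
          single_le_sum (fun a _ => mul_nonneg (hq.nonneg hP hpol hk' u a) ((hP k u a).1 s))
            (mem_univ _)

end IsAgreeingReachProb

lemma sub_pol_mul_le_stateOccupancy_sub (hP : ∀ k s a, P k s a ∈ stdSimplex ℝ (S (k + 1)))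
    (hpol : ∀ k s, pol k s ∈ stdSimplex ℝ A) (hq : IsOccupancy L P pol s0 q)
    (hpr : IsAgreeingReachProb L P pol s0 pstar pr) {k : ℕ} (hk : k ≤ L) (s : S k) :
    q k s (pstar k s) - pol k s (pstar k s) * pr k s ≤ stateOccupancy q k s - pr k s := by
  rw [hq.eq_mul_stateOccupancy hpol hk, ← mul_sub]
  exact mul_le_of_le_one_left (sub_nonneg.2 (hpr.le_stateOccupancy hP hpol hq hk s))
    (mem_Icc_of_mem_stdSimplex (hpol k s) _).2

lemma sum_stateOccupancy_sub_le [DecidableEq A]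
    (hP : ∀ k s a, P k s a ∈ stdSimplex ℝ (S (k + 1)))
    (hpol : ∀ k s, pol k s ∈ stdSimplex ℝ A) (hq : IsOccupancy L P pol s0 q)
    (hpr : IsAgreeingReachProb L P pol s0 pstar pr) {k : ℕ} (hk : k ≤ L) :
    ∑ s, (stateOccupancy q k s - pr k s)
      ≤ ∑ j ∈ range k, ∑ s, ∑ a ∈ univ.erase (pstar j s), q j s a := by
  induction k with
  | zero => simp [hq.stateOccupancy_zero hpol, hpr.zero]
  | succ k ih =>
    have hk' : k ≤ L := Nat.le_of_succ_le hk
    have hsplit : ∀ u, stateOccupancy q k u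
        = q k u (pstar k u) + ∑ a ∈ univ.erase (pstar k u), q k u a := fun u =>
      (add_sum_erase _ _ (mem_univ _)).symm
    calc ∑ s, (stateOccupancy q (k + 1) s - pr (k + 1) s)
        = ∑ u, (q k u (pstar k u) - pol k u (pstar k u) * pr k u)
          + ∑ u, ∑ a ∈ univ.erase (pstar k u), q k u a := by
          rw [sum_sub_distrib, hq.sum_stateOccupancy_succ hP hpol hk, hpr.sum_succ hP hk,
            sum_congr rfl fun u _ => hsplit u, sum_add_distrib, sum_sub_distrib]
          ring
      _ ≤ ∑ u, (stateOccupancy q k u - pr k u) + ∑ u, ∑ a ∈ univ.erase (pstar k u), q k u a :=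
          add_le_add_left (sum_le_sum fun u _ =>
            sub_pol_mul_le_stateOccupancy_sub hP hpol hq hpr hk' u) _
      _ ≤ ∑ j ∈ range (k + 1), ∑ s, ∑ a ∈ univ.erase (pstar j s), q j s a := by
          rw [sum_range_succ]
          gcongr
          exact ih hk'

end LayeredMDP

/-- In a layered episodic MDP, for any policy `pol` and deterministic policy `pstar`,
and for each layer `K < L`:
`Σ_{s ∈ S K} (q(s, π⋆(s)) − q⋆(s, π⋆(s))) ≤ Σ_{s ≠ s_L} Σ_{a ≠ π⋆(s)} q(s,a)`,
where `q` is the occupancy measure of `pol` under the true transition `P`, and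
`q⋆(s,a) = pol(a|s) · Pr[reach s having played π⋆'s action at every earlier layer]`
(the reaching probability `pr` being given by the forward recursion along `π⋆`). -/
theorem opt_action_occupancy_bound
    (L : ℕ) (S : ℕ → Type) [∀ k, Fintype (S k)] [DecidableEq (S 0)]
    (A : Type) [Fintype A] [DecidableEq A]
    (P : ∀ k, S k → A → S (k + 1) → ℝ)
    (hPnn : ∀ k (s : S k) (a : A) (s' : S (k + 1)), 0 ≤ P k s a s')
    (hPsum : ∀ k (s : S k) (a : A), ∑ s' : S (k + 1), P k s a s' = 1)
    (s0 : S 0)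
    (pol : ∀ k, S k → A → ℝ)
    (hpolnn : ∀ k (s : S k) (a : A), 0 ≤ pol k s a)
    (hpolsum : ∀ k (s : S k), ∑ a : A, pol k s a = 1)
    (pstar : ∀ k, S k → A)
    (q : ∀ k, S k → A → ℝ)
    (hq0 : ∀ (s : S 0) (a : A), q 0 s a = (if s = s0 then 1 else 0) * pol 0 s a)
    (hqrec : ∀ k, k < L → ∀ (s' : S (k + 1)) (a' : A),
      q (k + 1) s' a' = pol (k + 1) s' a' * ∑ s : S k, ∑ a : A, q k s a * P k s a s')
    (pr : ∀ k, S k → ℝ)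
    (hpr0 : ∀ s : S 0, pr 0 s = if s = s0 then 1 else 0)
    (hprrec : ∀ k, k < L → ∀ s' : S (k + 1),
      pr (k + 1) s' = ∑ u : S k, pr k u * pol k u (pstar k u) * P k u (pstar k u) s')
    (qstar : ∀ k, S k → A → ℝ)
    (hqstar : ∀ k (s : S k) (a : A), qstar k s a = pol k s a * pr k s) :
    ∀ K, K < L →
      ∑ s : S K, (q K s (pstar K s) - qstar K s (pstar K s))
        ≤ ∑ k ∈ Finset.range L, ∑ s : S k, ∑ a ∈ Finset.univ.erase (pstar k s),
            q k s a := by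
  have hP : ∀ k s a, P k s a ∈ stdSimplex ℝ (S (k + 1)) := fun k s a => ⟨hPnn k s a, hPsum k s a⟩
  have hpol : ∀ k s, pol k s ∈ stdSimplex ℝ A := fun k s => ⟨hpolnn k s, hpolsum k s⟩
  have hq : IsOccupancy L P pol s0 q := ⟨hq0, hqrec⟩
  have hpr : IsAgreeingReachProb L P pol s0 pstar pr := ⟨hpr0, hprrec⟩
  intro K hK
  calc ∑ s, (q K s (pstar K s) - qstar K s (pstar K s))
      ≤ ∑ s, (stateOccupancy q K s - pr K s) := sum_le_sum fun s _ => by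
        rw [hqstar]
        exact sub_pol_mul_le_stateOccupancy_sub hP hpol hq hpr hK.le s
    _ ≤ ∑ k ∈ range K, ∑ s, ∑ a ∈ univ.erase (pstar k s), q k s a :=
        sum_stateOccupancy_sub_le hP hpol hq hpr hK.le
    _ ≤ ∑ k ∈ range L, ∑ s, ∑ a ∈ univ.erase (pstar k s), q k s a :=
        sum_le_sum_of_subset_of_nonneg (range_subset_range.2 hK.le) fun j hj _ =>
          sum_nonneg fun s _ => sum_nonneg fun a _ =>
            hq.nonneg hP hpol (mem_range.1 hj).le s a
end
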